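/- arXiv:1705.10086 — 2 statements merged into one kernel-verified Lean document; each statement's English description precedes it below -/
import Mathlib

section
/- Suppose Col(D(μ)⁻¹ B(μ)) ⊆ Col(V) and Col((C(μ) D(μ)⁻¹)* H(μ)) ⊆ Col(W) (the subspace construction used when m ≤ p). Let v ∈ ℂ^m, w ∈ ℂ^p and σ > 0 satisfy H(μ) v = σ w and H(μ)* w = σ v (a pair of singular vectors of H(μ) with singular value σ). Then w* H′(μ) v = w* H̃′(μ) v. -/
/-!
Put `E(s) := D(s)⁻¹ - V (Wᴴ D(s) V)⁻¹ Wᴴ`. Then `E D V = 0`, `Wᴴ D E = 0` and hence `E D E = E`,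
so that `H - H̃ = C E B = (C E) D (E B)` wherever `D(s)` and `Wᴴ D(s) V` are invertible.
The condition on `Col(V)` gives `E(μ) B(μ) v = 0`; the condition on `Col(W)`, applied to
`H(μ) v = σ w` with `σ ≠ 0`, gives `wᴴ C(μ) E(μ) = 0`. Every term of the product rule for
`(C E) D (E B)` at `μ` contains one of these two factors, so `wᴴ (H - H̃)′(μ) v = 0`.
-/

open Matrix

attribute [local instance] Matrix.normedAddCommGroup Matrix.normedSpace

open Topology

namespace Matrix

section GalerkinInverse

variable {R : Type*} [CommRing R] {l m n k : Type*} [Fintype n] [DecidableEq n]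
  [Fintype k] [DecidableEq k] {D : Matrix n n R} {V : Matrix n k R} {U : Matrix k n R}

/-- The error of the Petrov–Galerkin approximation `V (U D V)⁻¹ U` of `D⁻¹`. -/
noncomputable def galerkinInvError (D : Matrix n n R) (V : Matrix n k R) (U : Matrix k n R) :
    Matrix n n R :=
  D⁻¹ - V * (U * D * V)⁻¹ * U

variable (hD : IsUnit D) (hK : IsUnit (U * D * V))
include hD hK

theorem galerkinInvError_mul_mul_eq_zero : galerkinInvError D V U * D * V = 0 := by
  rw [isUnit_iff_isUnit_det] at hD hK
  have h : V * (U * D * V)⁻¹ * U * D * V = V * ((U * D * V)⁻¹ * (U * D * V)) := by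
    simp only [Matrix.mul_assoc]
  rw [galerkinInvError, Matrix.sub_mul, Matrix.sub_mul, nonsing_inv_mul _ hD, Matrix.one_mul, h,
    nonsing_inv_mul _ hK, Matrix.mul_one, sub_self]

theorem mul_mul_galerkinInvError_eq_zero : U * D * galerkinInvError D V U = 0 := by
  rw [isUnit_iff_isUnit_det] at hD hK
  have h : U * D * (V * (U * D * V)⁻¹ * U) = U * D * V * (U * D * V)⁻¹ * U := by
    simp only [Matrix.mul_assoc]
  rw [galerkinInvError, Matrix.mul_sub, mul_nonsing_inv_cancel_right _ _ hD, h,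
    mul_nonsing_inv _ hK, Matrix.one_mul, sub_self]

theorem galerkinInvError_mul_mul_self :
    galerkinInvError D V U * D * galerkinInvError D V U = galerkinInvError D V U := by
  have h := galerkinInvError_mul_mul_eq_zero hD hK
  rw [isUnit_iff_isUnit_det] at hD
  nth_rw 2 [galerkinInvError]
  rw [Matrix.mul_sub, mul_nonsing_inv_cancel_right _ _ hD, ← Matrix.mul_assoc, ← Matrix.mul_assoc,
    h, Matrix.zero_mul, Matrix.zero_mul, sub_zero]

theorem mul_inv_mul_sub_eq_galerkinInvError (C : Matrix l n R) (B : Matrix n m R) :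
    C * D⁻¹ * B - C * V * (U * D * V)⁻¹ * (U * B) =
      C * galerkinInvError D V U * D * (galerkinInvError D V U * B) := calc
  _ = C * galerkinInvError D V U * B := by
    simp only [galerkinInvError, Matrix.mul_sub, Matrix.sub_mul, Matrix.mul_assoc]
  _ = C * (galerkinInvError D V U * D * galerkinInvError D V U) * B := by
    rw [galerkinInvError_mul_mul_self hD hK]
  _ = _ := by simp only [Matrix.mul_assoc]

theorem galerkinInvError_mul_mulVec_eq_zero [Fintype m] {B : Matrix n m R} {v : m → R}
    (hv : (D⁻¹ * B) *ᵥ v ∈ LinearMap.range V.mulVecLin) :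
    (galerkinInvError D V U * B) *ᵥ v = 0 := by
  obtain ⟨y, hy⟩ := hv
  have hB : galerkinInvError D V U * D * (D⁻¹ * B) = galerkinInvError D V U * B := by
    rw [Matrix.mul_assoc, mul_nonsing_inv_cancel_left _ _ ((isUnit_iff_isUnit_det _).mp hD)]
  rw [← hB, ← mulVec_mulVec, ← hy, mulVecLin_apply, mulVec_mulVec,
    galerkinInvError_mul_mul_eq_zero hD hK, zero_mulVec]

theorem vecMul_mul_galerkinInvError_eq_zero [Fintype l] {C : Matrix l n R} {u : l → R}
    (hu : u ᵥ* (C * D⁻¹) ∈ LinearMap.range U.vecMulLinear) :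
    u ᵥ* (C * galerkinInvError D V U) = 0 := by
  obtain ⟨z, hz⟩ := hu
  have hC : C * D⁻¹ * (D * galerkinInvError D V U) = C * galerkinInvError D V U := by
    rw [Matrix.mul_assoc, nonsing_inv_mul_cancel_left _ _ ((isUnit_iff_isUnit_det _).mp hD)]
  rw [← hC, ← vecMul_vecMul, ← hz, coe_vecMulLinear, vecMul_vecMul, ← Matrix.mul_assoc,
    mul_mul_galerkinInvError_eq_zero hD hK, vecMul_zero]

end GalerkinInverse

theorem star_vecMul_mem_range_of_mulVec_eq_smul {K : Type*} [Field K] [StarRing K]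
    {p m n k : Type*} [Fintype p] [Fintype m] [Fintype k] {A : Matrix p n K} {H : Matrix p m K}
    {W : Matrix n k K} {v : m → K} {w : p → K} {σ : K}
    (hcol : LinearMap.range (Aᴴ * H).mulVecLin ≤ LinearMap.range W.mulVecLin)
    (hv : H *ᵥ v = σ • w) (hσ : σ ≠ 0) :
    star w ᵥ* A ∈ LinearMap.range Wᴴ.vecMulLinear := by
  obtain ⟨y, hy⟩ := hcol (LinearMap.mem_range_self _ v)
  refine ⟨star (σ⁻¹ • y), show star (σ⁻¹ • y) ᵥ* Wᴴ = star w ᵥ* A from ?_⟩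
  rw [← star_mulVec, mulVec_smul, ← mulVecLin_apply, hy, mulVecLin_apply,
    ← mulVec_mulVec, hv, mulVec_smul, smul_smul, inv_mul_cancel₀ hσ, one_smul, star_mulVec,
    conjTranspose_conjTranspose]

end Matrix

theorem ContinuousAt.eventually_isUnit_matrix {X K : Type*} [TopologicalSpace X] [Field K]
    [TopologicalSpace K] [IsTopologicalRing K] [T1Space K] {n : Type*} [Fintype n]
    [DecidableEq n] {f : X → Matrix n n K} {x : X} (hf : ContinuousAt f x) (hx : IsUnit (f x)) :
    ∀ᶠ y in 𝓝 x, IsUnit (f y) := by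
  have hdet : (f x).det ≠ 0 := ((isUnit_iff_isUnit_det _).mp hx).ne_zero
  filter_upwards [(continuous_id.matrix_det.continuousAt.comp hf).eventually_ne hdet] with y hy
  exact (isUnit_iff_isUnit_det _).mpr (isUnit_iff_ne_zero.mpr hy)

section Calculus

variable {𝕜 : Type*} [NontriviallyNormedField 𝕜] [CompleteSpace 𝕜]
  {E : Type*} [NormedAddCommGroup E] [NormedSpace 𝕜 E]
  {l m n o : Type*} [Fintype l] [Fintype m] [Fintype n] [Fintype o]

noncomputable def Matrix.mulCLM : Matrix l m 𝕜 →L[𝕜] Matrix m n 𝕜 →L[𝕜] Matrix l n 𝕜 :=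
  LinearMap.toContinuousLinearMap
    (LinearMap.toContinuousLinearMap.toLinearMap ∘ₗ mulLinearMap 𝕜)

theorem DifferentiableAt.matrix_mul {f : E → Matrix l m 𝕜} {g : E → Matrix m n 𝕜} {x : E}
    (hf : DifferentiableAt 𝕜 f x) (hg : DifferentiableAt 𝕜 g x) :
    DifferentiableAt 𝕜 (fun y => f y * g y) x :=
  (mulCLM.hasFDerivAt_of_bilinear hf.hasFDerivAt hg.hasFDerivAt).differentiableAt

theorem HasDerivAt.matrix_mul {f : 𝕜 → Matrix l m 𝕜} {g : 𝕜 → Matrix m n 𝕜}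
    {f' : Matrix l m 𝕜} {g' : Matrix m n 𝕜} {x : 𝕜}
    (hf : HasDerivAt f f' x) (hg : HasDerivAt g g' x) :
    HasDerivAt (fun y => f y * g y) (f x * g' + f' * g x) x :=
  mulCLM.hasDerivAt_of_bilinear (fun _ => hf) (fun _ => hg)

theorem DifferentiableAt.matrix_inv [DecidableEq n] {f : E → Matrix n n 𝕜} {x : E}
    (hf : DifferentiableAt 𝕜 f x) (hx : IsUnit (f x)) :
    DifferentiableAt 𝕜 (fun y => (f y)⁻¹) x := by
  -- Differentiability only sees the topology, which the operator-norm ring structure on square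
  -- matrices shares with the entrywise norm.
  let normedRing : NormedRing (Matrix n n 𝕜) := Matrix.linftyOpNormedRing
  let _ : NormedAlgebra 𝕜 (Matrix n n 𝕜) := Matrix.linftyOpNormedAlgebra
  have : HasSummableGeomSeries (Matrix n n 𝕜) :=
    @instHasSummableGeomSeriesOfCompleteSpace _ normedRing (FiniteDimensional.complete 𝕜 _)
  simp only [nonsing_inv_eq_ringInverse]
  exact (differentiableAt_inverse hx).comp x hf

theorem DifferentiableAt.galerkinInvError [DecidableEq n] [DecidableEq o]
    {D : E → Matrix n n 𝕜} {V : Matrix n o 𝕜} {U : Matrix o n 𝕜} {x : E}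
    (hD : DifferentiableAt 𝕜 D x) (hDx : IsUnit (D x)) (hK : IsUnit (U * D x * V)) :
    DifferentiableAt 𝕜 (fun y => (D y).galerkinInvError V U) x := by
  have hKinv := (((differentiableAt_const U).matrix_mul hD).matrix_mul
    (differentiableAt_const V)).matrix_inv hK
  exact (hD.matrix_inv hDx).sub
    (((differentiableAt_const V).matrix_mul hKinv).matrix_mul (differentiableAt_const U))

theorem dotProduct_deriv_mulVec_eq_of_sub_eventuallyEq {f g : 𝕜 → Matrix l o 𝕜}
    {F : 𝕜 → Matrix l m 𝕜} {D : 𝕜 → Matrix m n 𝕜} {G : 𝕜 → Matrix n o 𝕜} {x : 𝕜}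
    {u : l → 𝕜} {v : o → 𝕜} (hf : DifferentiableAt 𝕜 f x) (hg : DifferentiableAt 𝕜 g x)
    (hfg : (fun y => f y - g y) =ᶠ[𝓝 x] fun y => F y * D y * G y)
    (hF : DifferentiableAt 𝕜 F x) (hD : DifferentiableAt 𝕜 D x) (hG : DifferentiableAt 𝕜 G x)
    (hu : u ᵥ* F x = 0) (hv : G x *ᵥ v = 0) :
    u ⬝ᵥ deriv f x *ᵥ v = u ⬝ᵥ deriv g x *ᵥ v := by
  have hFDG := (hF.hasDerivAt.matrix_mul hD.hasDerivAt).matrix_mul hG.hasDerivAt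
  have hsub : deriv f x - deriv g x = _ :=
    (hf.hasDerivAt.sub hg.hasDerivAt).unique (hFDG.congr_of_eventuallyEq hfg)
  rw [← sub_eq_zero, ← dotProduct_sub, ← sub_mulVec, hsub]
  simp [add_mulVec, Matrix.mul_assoc, ← mulVec_mulVec, dotProduct_mulVec, hu, hv]

end Calculus

theorem singular_value_derivative_interpolation_m_le_p_general
    {n m p k : ℕ} (μ : ℂ)
    (B : ℂ → Matrix (Fin n) (Fin m) ℂ) (C : ℂ → Matrix (Fin p) (Fin n) ℂ)
    (D : ℂ → Matrix (Fin n) (Fin n) ℂ)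
    (hB : DifferentiableAt ℂ B μ) (hC : DifferentiableAt ℂ C μ)
    (hD : DifferentiableAt ℂ D μ)
    (hDμ : IsUnit (D μ))
    (V W : Matrix (Fin n) (Fin k) ℂ)
    (hWDV : IsUnit (Wᴴ * D μ * V))
    (hcolV : LinearMap.range ((D μ)⁻¹ * B μ).mulVecLin ≤ LinearMap.range V.mulVecLin)
    (hcolW : LinearMap.range ((C μ * (D μ)⁻¹)ᴴ * (C μ * (D μ)⁻¹ * B μ)).mulVecLin ≤
      LinearMap.range W.mulVecLin)
    (v : Fin m → ℂ) (w : Fin p → ℂ) (σ : ℝ) (hσ : 0 < σ)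
    (hv : (C μ * (D μ)⁻¹ * B μ).mulVec v = (σ : ℂ) • w) :
    star w ⬝ᵥ (deriv (fun s => C s * (D s)⁻¹ * B s) μ).mulVec v =
      star w ⬝ᵥ (deriv (fun s => (C s * V) * (Wᴴ * D s * V)⁻¹ * (Wᴴ * B s)) μ).mulVec v := by
  have hK : DifferentiableAt ℂ (fun s => Wᴴ * D s * V) μ :=
    ((differentiableAt_const Wᴴ).matrix_mul hD).matrix_mul (differentiableAt_const V)
  have hE := hD.galerkinInvError (V := V) hDμ hWDV
  have hH := (hC.matrix_mul (hD.matrix_inv hDμ)).matrix_mul hB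
  have hH' := ((hC.matrix_mul (differentiableAt_const V)).matrix_mul
    (hK.matrix_inv hWDV)).matrix_mul ((differentiableAt_const Wᴴ).matrix_mul hB)
  have hError : (fun s => C s * (D s)⁻¹ * B s - C s * V * (Wᴴ * D s * V)⁻¹ * (Wᴴ * B s)) =ᶠ[𝓝 μ]
      fun s => C s * (D s).galerkinInvError V Wᴴ * D s * ((D s).galerkinInvError V Wᴴ * B s) := by
    filter_upwards [hD.continuousAt.eventually_isUnit_matrix hDμ,
      hK.continuousAt.eventually_isUnit_matrix hWDV] with s hDs hKs
    exact mul_inv_mul_sub_eq_galerkinInvError hDs hKs (C s) (B s)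
  have hσ' : (σ : ℂ) ≠ 0 := by exact_mod_cast hσ.ne'
  have hleft := vecMul_mul_galerkinInvError_eq_zero hDμ hWDV
    (star_vecMul_mem_range_of_mulVec_eq_smul hcolW hv hσ')
  have hright := galerkinInvError_mul_mulVec_eq_zero (B := B μ) hDμ hWDV
    (hcolV (LinearMap.mem_range_self _ v))
  exact dotProduct_deriv_mulVec_eq_of_sub_eventuallyEq hH hH' hError (hC.matrix_mul hE) hD
    (hE.matrix_mul hB) hleft hright

/-- Hermite interpolation of the derivative in the direction of a singular pair,
for the subspace construction used when `m ≤ p`: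
if `Col(D(μ)⁻¹ B(μ)) ⊆ Col(V)` and `Col((C(μ) D(μ)⁻¹)ᴴ H(μ)) ⊆ Col(W)`,
and `H(μ) v = σ w`, `H(μ)ᴴ w = σ v` with `σ > 0`, then
`wᴴ H′(μ) v = wᴴ H̃′(μ) v`. -/
theorem singular_value_derivative_interpolation_m_le_p
    {n m p k : ℕ} (μ : ℂ)
    (B : ℂ → Matrix (Fin n) (Fin m) ℂ) (C : ℂ → Matrix (Fin p) (Fin n) ℂ)
    (D : ℂ → Matrix (Fin n) (Fin n) ℂ)
    (hB : DifferentiableAt ℂ B μ) (hC : DifferentiableAt ℂ C μ)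
    (hD : DifferentiableAt ℂ D μ)
    (hDμ : IsUnit (D μ))
    (V W : Matrix (Fin n) (Fin k) ℂ)
    (hWDV : IsUnit (Wᴴ * D μ * V))
    (hcolV : LinearMap.range ((D μ)⁻¹ * B μ).mulVecLin ≤ LinearMap.range V.mulVecLin)
    (hcolW : LinearMap.range ((C μ * (D μ)⁻¹)ᴴ * (C μ * (D μ)⁻¹ * B μ)).mulVecLin ≤
      LinearMap.range W.mulVecLin)
    (v : Fin m → ℂ) (w : Fin p → ℂ) (σ : ℝ) (hσ : 0 < σ)
    (hv : (C μ * (D μ)⁻¹ * B μ).mulVec v = (σ : ℂ) • w)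
    (hw : (C μ * (D μ)⁻¹ * B μ)ᴴ.mulVec w = (σ : ℂ) • v) :
    star w ⬝ᵥ (deriv (fun s => C s * (D s)⁻¹ * B s) μ).mulVec v =
      star w ⬝ᵥ (deriv (fun s => (C s * V) * (Wᴴ * D s * V)⁻¹ * (Wᴴ * B s)) μ).mulVec v :=
  singular_value_derivative_interpolation_m_le_p_general μ B C D hB hC hD hDμ V W hWDV hcolV hcolW v
    w σ hσ hv
end

section
/- Under the hypotheses of the key error estimate — I ⊆ ℝ an interval containing ω*, ω_r, ω_{r+1}; f twice differentiable on I with f′(ω*) = 0, f″ Lipschitz on I with constant γ, and |f″(ω_r)| ≥ ℓ₁ > 0; g three times differentiable on I with |g‴| ≤ γ₁ on I and |g″(ω_r)| ≥ ℓ₂ > 0; f′(ω_r) = g′(ω_r); g′(ω_{r+1}) = 0 — set δ := max{|ω_{r+1} − ω*|, |ω_r − ω*|}, c₁ := γ₁/ℓ₂, c₂ := 1/(ℓ₁·ℓ₂), and c₃ := γ/(2·ℓ₁) + γ₁/ℓ₂. Then (1 − c₁·δ)·|ω_{r+1} − ω*| ≤ c₂·|g″(ω_r) − f″(ω_r)|·|f′(ω_r)|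 + c₃·|ω_r − ω*|². -/
/-!
Linearizing f′ and g′ at ω_r, where they agree, writes their zeros ω⋆ and ω_{r+1} as Newton
steps with slopes f″(ω_r) and g″(ω_r) plus Taylor remainders; comparing the two steps gives
estimate (3.10). The remainders are quadratic because f″ and g″ are Lipschitz (g″ through the
bound on g‴). In (3.10), `|ω_{r+1} − ω_r|² ≤ 2|ω_{r+1} − ω⋆|² + 2|ω_r − ω⋆|²` and
`|ω_{r+1} − ω⋆|² ≤ δ·|ω_{r+1} − ω⋆|` move the ω_{r+1}-term to the left.
-/

open Set

theorem Convex.isMinOn_of_hasDerivAt_of_sub_mul_nonneg {I : Set ℝ} (hI : Convex ℝ I)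
    {u u' : ℝ → ℝ} {a : ℝ} (ha : a ∈ I) (hu : ∀ x ∈ I, HasDerivAt u (u' x) x)
    (hsign : ∀ x ∈ I, 0 ≤ (x - a) * u' x) : IsMinOn u I a := by
  intro b hb
  have hsub : uIcc a b ⊆ I := hI.ordConnected.uIcc_subset ha hb
  have hcont : ContinuousOn u (uIcc a b) :=
    fun x hx => (hu x (hsub hx)).continuousAt.continuousWithinAt
  have hderiv : ∀ x ∈ interior (uIcc a b), HasDerivWithinAt u (u' x) (interior (uIcc a b)) x :=
    fun x hx => (hu x (hsub (interior_subset hx))).hasDerivWithinAt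
  rcases le_total a b with hab | hba
  · rw [uIcc_of_le hab] at hsub hcont hderiv
    refine monotoneOn_of_hasDerivWithinAt_nonneg (convex_Icc a b) hcont hderiv (fun x hx => ?_)
      (left_mem_Icc.2 hab) (right_mem_Icc.2 hab) hab
    rw [interior_Icc] at hx
    exact nonneg_of_mul_nonneg_right (hsign x (hsub (Ioo_subset_Icc_self hx))) (sub_pos.2 hx.1)
  · rw [uIcc_of_ge hba] at hsub hcont hderiv
    refine antitoneOn_of_hasDerivWithinAt_nonpos (convex_Icc b a) hcont hderiv (fun x hx => ?_)
      (left_mem_Icc.2 hba) (right_mem_Icc.2 hba) hba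
    rw [interior_Icc] at hx
    exact nonpos_of_mul_nonneg_right (hsign x (hsub (Ioo_subset_Icc_self hx))) (sub_neg.2 hx.2)

theorem Convex.sub_le_of_hasDerivAt_of_abs_sub_le {I : Set ℝ} (hI : Convex ℝ I)
    {p p' : ℝ → ℝ} {a b K : ℝ} (ha : a ∈ I) (hb : b ∈ I)
    (hp : ∀ x ∈ I, HasDerivAt p (p' x) x) (hlip : ∀ x ∈ I, |p' x - p' a| ≤ K * |x - a|) :
    p a + p' a * (b - a) - p b ≤ K / 2 * (b - a) ^ 2 := by
  -- `K/2·(x - a)²` minus the linearization error has derivative of the sign of `x - a`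
  have hu : ∀ x ∈ I, HasDerivAt (fun x => K / 2 * (x - a) ^ 2 - p a - p' a * (x - a) + p x)
      (K * (x - a) - p' a + p' x) x := by
    intro x hx
    have hq := ((((hasDerivAt_id' x).sub_const a).pow 2).const_mul (K / 2)).sub_const (p a)
      |>.sub (((hasDerivAt_id' x).sub_const a).const_mul (p' a)) |>.add (hp x hx)
    exact hq.congr_deriv (by norm_num; ring)
  have hmin := hI.isMinOn_of_hasDerivAt_of_sub_mul_nonneg ha hu fun x hx => by
    have h := abs_le.1 ((abs_mul (x - a) (p' x - p' a)).trans_le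
      (mul_le_mul_of_nonneg_left (hlip x hx) (abs_nonneg _)))
    have hsq : |x - a| * (K * |x - a|) = K * ((x - a) * (x - a)) := by
      rw [mul_left_comm, abs_mul_abs_self]
    linarith [h.1]
  have := isMinOn_iff.1 hmin b hb
  simp only [sub_self] at this
  linarith

theorem Convex.abs_sub_le_of_hasDerivAt_of_abs_sub_le {I : Set ℝ} (hI : Convex ℝ I)
    {p p' : ℝ → ℝ} {a b K : ℝ} (ha : a ∈ I) (hb : b ∈ I)
    (hp : ∀ x ∈ I, HasDerivAt p (p' x) x) (hlip : ∀ x ∈ I, |p' x - p' a| ≤ K * |x - a|) :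
    |p a + p' a * (b - a) - p b| ≤ K / 2 * (b - a) ^ 2 := by
  have hneg := hI.sub_le_of_hasDerivAt_of_abs_sub_le (p := -p) (p' := -p') ha hb
    (fun x hx => (hp x hx).neg) fun x hx => by
      simpa only [Pi.neg_apply, neg_sub_neg, abs_sub_comm] using hlip x hx
  simp only [Pi.neg_apply] at hneg
  exact abs_le.2 ⟨by linarith, hI.sub_le_of_hasDerivAt_of_abs_sub_le ha hb hp hlip⟩

/-- `x` and `z` are approximate zeros of the lines through `(y, F)` with slopes `A` and `B`. -/
theorem abs_sub_le_of_linear_residuals {A B F x y z ℓ₁ ℓ₂ : ℝ} (hℓ₁ : 0 < ℓ₁) (hℓ₂ : 0 < ℓ₂)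
    (hA : ℓ₁ ≤ |A|) (hB : ℓ₂ ≤ |B|) :
    |z - x| ≤ 1 / (ℓ₁ * ℓ₂) * |B - A| * |F| + |F + A * (x - y)| / ℓ₁ + |F + B * (z - y)| / ℓ₂ := by
  have hA₀ : A ≠ 0 := abs_pos.1 (hℓ₁.trans_le hA)
  have hB₀ : B ≠ 0 := abs_pos.1 (hℓ₂.trans_le hB)
  have hsplit : z - x = F * (B - A) / (A * B) + (F + B * (z - y)) / B - (F + A * (x - y)) / A := by
    field_simp
    ring
  calc |z - x|
      ≤ |F * (B - A) / (A * B)| + |(F + B * (z - y)) / B| + |(F + A * (x - y)) / A| := by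
        rw [hsplit, sub_eq_add_neg _ ((F + A * (x - y)) / A), ← abs_neg ((F + A * (x - y)) / A)]
        exact abs_add_three _ _ _
    _ = |F| * |B - A| / (|A| * |B|) + |F + B * (z - y)| / |B| + |F + A * (x - y)| / |A| := by
        rw [abs_div, abs_div, abs_div, abs_mul, abs_mul]
    _ ≤ |F| * |B - A| / (ℓ₁ * ℓ₂) + |F + B * (z - y)| / ℓ₂ + |F + A * (x - y)| / ℓ₁ := by
        gcongr
    _ = 1 / (ℓ₁ * ℓ₂) * |B - A| * |F| + |F + A * (x - y)| / ℓ₁ + |F + B * (z - y)| / ℓ₂ := by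
        ring

theorem key_error_estimate {I : Set ℝ} (hI : Convex ℝ I) {ωs ωr ωr1 : ℝ}
    (hωs : ωs ∈ I) (hωr : ωr ∈ I) (hωr1 : ωr1 ∈ I) {f' f'' g' g'' : ℝ → ℝ} {γ γ₁ ℓ₁ ℓ₂ : ℝ}
    (hf'' : ∀ x ∈ I, HasDerivAt f' (f'' x) x) (hfs : f' ωs = 0)
    (hLipf : ∀ x ∈ I, |f'' x - f'' ωr| ≤ γ * |x - ωr|) (hl1 : 0 < ℓ₁) (hf''r : ℓ₁ ≤ |f'' ωr|)
    (hg'' : ∀ x ∈ I, HasDerivAt g' (g'' x) x)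
    (hLipg : ∀ x ∈ I, |g'' x - g'' ωr| ≤ γ₁ * |x - ωr|) (hl2 : 0 < ℓ₂) (hg''r : ℓ₂ ≤ |g'' ωr|)
    (hinterp : f' ωr = g' ωr) (hopt : g' ωr1 = 0) :
    |ωr1 - ωs| ≤ 1 / (ℓ₁ * ℓ₂) * |g'' ωr - f'' ωr| * |f' ωr|
      + γ / (2 * ℓ₁) * (ωr - ωs) ^ 2 + γ₁ / (2 * ℓ₂) * (ωr1 - ωr) ^ 2 := by
  have hf := hI.abs_sub_le_of_hasDerivAt_of_abs_sub_le hωr hωs hf'' hLipf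
  have hg := hI.abs_sub_le_of_hasDerivAt_of_abs_sub_le hωr hωr1 hg'' hLipg
  rw [hfs, sub_zero] at hf
  rw [hopt, sub_zero, ← hinterp] at hg
  calc |ωr1 - ωs|
      ≤ 1 / (ℓ₁ * ℓ₂) * |g'' ωr - f'' ωr| * |f' ωr| + |f' ωr + f'' ωr * (ωs - ωr)| / ℓ₁
        + |f' ωr + g'' ωr * (ωr1 - ωr)| / ℓ₂ :=
        abs_sub_le_of_linear_residuals hl1 hl2 hf''r hg''r
    _ ≤ 1 / (ℓ₁ * ℓ₂) * |g'' ωr - f'' ωr| * |f' ωr| + γ / 2 * (ωs - ωr) ^ 2 / ℓ₁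
        + γ₁ / 2 * (ωr1 - ωr) ^ 2 / ℓ₂ := by
        gcongr
    _ = _ := by ring

theorem key_error_estimate_young_general
    (I : Set ℝ) (hI : Convex ℝ I)
    (ωs ωr ωr1 : ℝ) (hωs : ωs ∈ I) (hωr : ωr ∈ I) (hωr1 : ωr1 ∈ I)
    (f' f'' g' g'' g''' : ℝ → ℝ) (γ γ₁ ℓ₁ ℓ₂ : ℝ)
    (hf'' : ∀ x ∈ I, HasDerivAt f' (f'' x) x)
    (hfs : f' ωs = 0)
    (hLipf : ∀ x ∈ I, ∀ y ∈ I, |f'' x - f'' y| ≤ γ * |x - y|)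
    (hl1 : 0 < ℓ₁) (hf''r : ℓ₁ ≤ |f'' ωr|)
    (hg'' : ∀ x ∈ I, HasDerivAt g' (g'' x) x)
    (hg''' : ∀ x ∈ I, HasDerivAt g'' (g''' x) x)
    (hg3 : ∀ x ∈ I, |g''' x| ≤ γ₁)
    (hl2 : 0 < ℓ₂) (hg''r : ℓ₂ ≤ |g'' ωr|)
    (hinterp : f' ωr = g' ωr) (hopt : g' ωr1 = 0)
    (δ c₁ c₂ c₃ : ℝ)
    (hδ : δ = max |ωr1 - ωs| |ωr - ωs|)
    (hc₁ : c₁ = γ₁ / ℓ₂) (hc₂ : c₂ = 1 / (ℓ₁ * ℓ₂))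
    (hc₃ : c₃ = γ / (2 * ℓ₁) + γ₁ / ℓ₂) :
    (1 - c₁ * δ) * |ωr1 - ωs| ≤
      c₂ * |g'' ωr - f'' ωr| * |f' ωr| + c₃ * |ωr - ωs| ^ 2 := by
  have hLipg : ∀ x ∈ I, |g'' x - g'' ωr| ≤ γ₁ * |x - ωr| := fun x hx => by
    simpa only [Real.norm_eq_abs] using hI.norm_image_sub_le_of_norm_hasDerivWithin_le
      (fun y hy => (hg''' y hy).hasDerivWithinAt)
      (fun y hy => by simpa only [Real.norm_eq_abs] using hg3 y hy) hωr hx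
  have hkey := key_error_estimate hI hωs hωr hωr1 hf'' hfs (fun x hx => hLipf x hx ωr hωr) hl1
    hf''r hg'' hLipg hl2 hg''r hinterp hopt
  have hsq : (ωr1 - ωs) ^ 2 ≤ δ * |ωr1 - ωs| := by
    rw [← sq_abs, sq]
    exact mul_le_mul_of_nonneg_right (hδ ▸ le_max_left _ _) (abs_nonneg _)
  have hyoung : (ωr1 - ωr) ^ 2 ≤ 2 * (δ * |ωr1 - ωs|) + 2 * (ωr - ωs) ^ 2 := by
    nlinarith [sq_nonneg (ωr1 + ωr - 2 * ωs)]
  have hc : 0 ≤ γ₁ / (2 * ℓ₂) := div_nonneg ((abs_nonneg _).trans (hg3 ωr hωr)) (by positivity)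
  have hc2 : γ₁ / ℓ₂ = 2 * (γ₁ / (2 * ℓ₂)) := by field_simp
  have hyoung_scaled := mul_le_mul_of_nonneg_left hyoung hc
  subst hc₁ hc₂ hc₃
  rw [sq_abs, hc2]
  linarith

/-- Estimate (3.11), obtained from the key estimate (3.10) via Young's inequality:
with `δ = max{|ω_{r+1} − ω⋆|, |ω_r − ω⋆|}`, `c₁ = γ₁/ℓ₂`, `c₂ = 1/(ℓ₁ℓ₂)`,
`c₃ = γ/(2ℓ₁) + γ₁/ℓ₂`, one has
`(1 − c₁δ)·|ω_{r+1} − ω⋆| ≤ c₂·|g″(ω_r) − f″(ω_r)|·|f′(ω_r)| + c₃·|ω_r − ω⋆|²`. -/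
theorem key_error_estimate_young
    (I : Set ℝ) (hI : Convex ℝ I)
    (ωs ωr ωr1 : ℝ) (hωs : ωs ∈ I) (hωr : ωr ∈ I) (hωr1 : ωr1 ∈ I)
    (f f' f'' g g' g'' g''' : ℝ → ℝ) (γ γ₁ ℓ₁ ℓ₂ : ℝ)
    (hf' : ∀ x ∈ I, HasDerivAt f (f' x) x)
    (hf'' : ∀ x ∈ I, HasDerivAt f' (f'' x) x)
    (hfs : f' ωs = 0)
    (hLipf : ∀ x ∈ I, ∀ y ∈ I, |f'' x - f'' y| ≤ γ * |x - y|)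
    (hl1 : 0 < ℓ₁) (hf''r : ℓ₁ ≤ |f'' ωr|)
    (hg' : ∀ x ∈ I, HasDerivAt g (g' x) x)
    (hg'' : ∀ x ∈ I, HasDerivAt g' (g'' x) x)
    (hg''' : ∀ x ∈ I, HasDerivAt g'' (g''' x) x)
    (hg3 : ∀ x ∈ I, |g''' x| ≤ γ₁)
    (hl2 : 0 < ℓ₂) (hg''r : ℓ₂ ≤ |g'' ωr|)
    (hinterp : f' ωr = g' ωr) (hopt : g' ωr1 = 0)
    (δ c₁ c₂ c₃ : ℝ)
    (hδ : δ = max |ωr1 - ωs| |ωr - ωs|)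
    (hc₁ : c₁ = γ₁ / ℓ₂) (hc₂ : c₂ = 1 / (ℓ₁ * ℓ₂))
    (hc₃ : c₃ = γ / (2 * ℓ₁) + γ₁ / ℓ₂) :
    (1 - c₁ * δ) * |ωr1 - ωs| ≤
      c₂ * |g'' ωr - f'' ωr| * |f' ωr| + c₃ * |ωr - ωs| ^ 2 :=
  key_error_estimate_young_general I hI ωs ωr ωr1 hωs hωr hωr1 f' f'' g' g'' g''' γ γ₁ ℓ₁ ℓ₂ hf''
    hfs hLipf hl1 hf''r hg'' hg''' hg3 hl2 hg''r hinterp hopt δ c₁ c₂ c₃ hδ hc₁ hc₂ hc₃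
end
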